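/- arXiv:1202.6469 — 2 statements merged into one kernel-verified Lean document; each statement's English description precedes it below -/
import Mathlib

section
/- Let S ⊆ ℝⁿ be a nonempty compact convex set and let Λ : ℝⁿ → ℝ be a convex continuous function. Then, with values in ℝ ∪ {+∞}, inf_{w ∈ S} sup_{τ ∈ ℝⁿ} (⟨τ, w⟩ − Λ(τ)) = sup_{τ ∈ ℝⁿ} inf_{w ∈ S} (⟨τ, w⟩ − Λ(τ)). -/
/-!
Weak duality gives `≥`. For `≤`, fix a real `m` above the sup-inf. The closed sets
`{w ∈ S | ⟪τ, w⟫ - Λ τ ≤ m}` have the finite intersection property: if `τ₁, …, τₖ` left no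
common point, the compact convex image of `S` under `w ↦ (⟪τᵢ, w⟫ - Λ τᵢ - m)ᵢ` would miss the
nonpositive orthant, so Hahn–Banach yields simplex weights `p` with
`∑ pᵢ (⟪τᵢ, w⟫ - Λ τᵢ) ≥ m + ε` on `S`, and by concavity `τ = ∑ pᵢ τᵢ` pushes the sup-inf
above `m`. By compactness of `S` some `w₀ ∈ S` lies in all these sets, i.e. `Λ* w₀ ≤ m`.
-/

open Set RealInnerProductSpace

theorem exists_mem_stdSimplex_forall_le_sum_mul {ι : Type*} [Fintype ι] {K : Set (ι → ℝ)}
    (hK : K.Nonempty) (hKcomp : IsCompact K) (hKconv : Convex ℝ K)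
    (hpos : ∀ y ∈ K, ∃ i, 0 < y i) :
    ∃ p ∈ stdSimplex ℝ ι, ∃ ε > 0, ∀ y ∈ K, ε ≤ ∑ i, p i * y i := by
  classical
  set A : Set (ι → ℝ) := univ.pi fun _ => Iic 0
  have hAK : Disjoint A K := disjoint_left.2 fun y hyA hyK => by
    obtain ⟨i, hi⟩ := hpos y hyK
    exact (mem_univ_pi.1 hyA i).not_gt hi
  obtain ⟨f, u, v, hfA, huv, hfK⟩ := geometric_hahn_banach_closed_compact
    (convex_pi fun _ _ => convex_Iic 0) (isClosed_set_pi fun _ _ => isClosed_Iic) hKconv hKcomp hAK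
  have hu : 0 < u := by simpa using hfA 0 fun _ _ => self_mem_Iic
  -- `A` is a cone, so a functional bounded above on it by `u` is in fact bounded by `0`.
  have hfA_nonpos : ∀ a ∈ A, f a ≤ 0 := by
    intro a ha
    by_contra! hfa
    have hta : (u / f a) • a ∈ A := fun i _ =>
      mul_nonpos_of_nonneg_of_nonpos (div_pos hu hfa).le (mem_univ_pi.1 ha i)
    have := hfA _ hta
    rw [map_smul, smul_eq_mul, div_mul_cancel₀ u hfa.ne'] at this
    exact this.false
  set lam : ι → ℝ := fun i => f fun j => if i = j then 1 else 0
  have hlam : ∀ i, 0 ≤ lam i := fun i => by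
    have := hfA_nonpos (-fun j => if i = j then 1 else 0) fun j _ => by
      simp only [Pi.neg_apply, mem_Iic]; split_ifs <;> norm_num
    simpa [lam] using this
  have hf : ∀ y, f y = ∑ i, lam i * y i := fun y => by
    simpa [mul_comm] using f.toLinearMap.pi_apply_eq_sum_univ y
  obtain ⟨y₀, hy₀⟩ := hK
  have hs : 0 < ∑ i, lam i := by
    refine (Finset.sum_nonneg fun i _ => hlam i).lt_of_ne fun hs => ?_
    have hlam0 := (Finset.sum_eq_zero_iff_of_nonneg fun i _ => hlam i).1 hs.symm
    have := hfK y₀ hy₀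
    simp only [hf, hlam0 _ (Finset.mem_univ _), zero_mul, Finset.sum_const_zero] at this
    linarith
  refine ⟨fun i => lam i / ∑ j, lam j, ⟨fun i => div_nonneg (hlam i) hs.le, ?_⟩,
    v / ∑ j, lam j, div_pos (hu.trans huv) hs, fun y hy => ?_⟩
  · rw [← Finset.sum_div, div_self hs.ne']
  · simp only [div_mul_eq_mul_div, ← Finset.sum_div, ← hf]
    exact div_le_div_of_nonneg_right (hfK y hy).le hs.le

variable {E : Type*} [NormedAddCommGroup E] [InnerProductSpace ℝ E]

theorem exists_forall_add_le_inner_sub_of_finset {S : Set E} (hScomp : IsCompact S)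
    (hSconv : Convex ℝ S) {Λ : E → ℝ} (hΛ : ConvexOn ℝ univ Λ) {m : ℝ} (F : Finset E)
    (hF : ∀ w ∈ S, ∃ τ ∈ F, m < ⟪τ, w⟫ - Λ τ) :
    ∃ τ ε, 0 < ε ∧ ∀ w ∈ S, m + ε ≤ ⟪τ, w⟫ - Λ τ := by
  rcases S.eq_empty_or_nonempty with rfl | hS
  · exact ⟨0, 1, one_pos, by simp⟩
  let L : E →L[ℝ] (F → ℝ) := .pi fun τ => innerSL ℝ (τ : E)
  let c : F → ℝ := fun τ => -(m + Λ τ)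
  set K := (fun w => c + L w) '' S
  have hKconv : Convex ℝ K := by
    convert (hSconv.linear_image L.toLinearMap).translate c using 1
    · rfl
    · exact (image_image _ _ _).symm
  have hKcomp : IsCompact K := hScomp.image (by fun_prop)
  obtain ⟨p, ⟨hp0, hp1⟩, ε, hε, hpK⟩ := exists_mem_stdSimplex_forall_le_sum_mul (hS.image _)
    hKcomp hKconv <| by
      rintro _ ⟨w, hw, rfl⟩
      obtain ⟨τ, hτF, hτ⟩ := hF w hw
      exact ⟨⟨τ, hτF⟩, by simp [c, L]; linarith⟩
  refine ⟨∑ τ, p τ • (τ : E), ε, hε, fun w hw => ?_⟩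
  have hconc : ConcaveOn ℝ univ fun τ => ⟪τ, w⟫ - Λ τ :=
    (((innerₗ E).flip w).concaveOn convex_univ).sub hΛ
  calc m + ε ≤ m + ∑ τ, p τ * (c τ + L w τ) := by simpa using hpK _ ⟨w, hw, rfl⟩
    _ = ∑ τ, p τ • (⟪(τ : E), w⟫ - Λ τ) := by
      rw [← one_mul m, ← hp1, Finset.sum_mul, ← Finset.sum_add_distrib]
      refine Finset.sum_congr rfl fun τ _ => ?_
      simp [c, L, real_inner_comm]
      ring
    _ ≤ ⟪∑ τ, p τ • (τ : E), w⟫ - Λ (∑ τ, p τ • (τ : E)) :=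
      hconc.le_map_sum (fun τ _ => hp0 τ) hp1 fun _ _ => mem_univ _

theorem iInf_iSup_inner_sub_le_iSup_iInf {S : Set E} (hScomp : IsCompact S) (hSconv : Convex ℝ S)
    {Λ : E → ℝ} (hΛ : ConvexOn ℝ univ Λ) :
    ⨅ w ∈ S, ⨆ τ, ((⟪τ, w⟫ - Λ τ : ℝ) : EReal) ≤ ⨆ τ, ⨅ w ∈ S, ((⟪τ, w⟫ - Λ τ : ℝ) : EReal) := by
  refine EReal.le_of_forall_lt_iff_le.1 fun m hm => ?_
  have hfinite : ∀ F : Finset E, (S ∩ ⋂ τ ∈ F, {w | ⟪τ, w⟫ - Λ τ ≤ m}).Nonempty := by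
    intro F
    by_contra hempty
    have hF : ∀ w ∈ S, ∃ τ ∈ F, (m : ℝ) < ⟪τ, w⟫ - Λ τ := fun w hw => by
      by_contra! h
      exact hempty ⟨w, hw, mem_iInter₂.2 h⟩
    obtain ⟨τ, ε, hε, hτ⟩ := exists_forall_add_le_inner_sub_of_finset hScomp hSconv hΛ F hF
    have hle : ((m + ε : ℝ) : EReal) ≤ ⨆ τ, ⨅ w ∈ S, ((⟪τ, w⟫ - Λ τ : ℝ) : EReal) :=
      le_iSup_of_le τ <| le_iInf₂ fun w hw => EReal.coe_le_coe_iff.2 (hτ w hw)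
    exact (hle.trans_lt hm).not_ge (EReal.coe_le_coe_iff.2 (by linarith))
  obtain ⟨w₀, hw₀S, hw₀⟩ := hScomp.inter_iInter_nonempty _
    (fun τ => isClosed_le (by fun_prop) continuous_const) hfinite
  exact (iInf₂_le w₀ hw₀S).trans <| iSup_le fun τ => EReal.coe_le_coe_iff.2 (mem_iInter.1 hw₀ τ)

theorem iInf_iSup_inner_sub_eq_iSup_iInf {S : Set E} (hScomp : IsCompact S) (hSconv : Convex ℝ S)
    {Λ : E → ℝ} (hΛ : ConvexOn ℝ univ Λ) :
    ⨅ w ∈ S, ⨆ τ, ((⟪τ, w⟫ - Λ τ : ℝ) : EReal) = ⨆ τ, ⨅ w ∈ S, ((⟪τ, w⟫ - Λ τ : ℝ) : EReal) :=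
  (iInf_iSup_inner_sub_le_iSup_iInf hScomp hSconv hΛ).antisymm <|
    le_iInf₂ fun w hw => iSup_mono fun _ => iInf₂_le w hw

theorem stmt4_general {n : ℕ} (S : Set (EuclideanSpace ℝ (Fin n)))
    (hScomp : IsCompact S) (hSconv : Convex ℝ S)
    (Λ : EuclideanSpace ℝ (Fin n) → ℝ)
    (hΛconv : ConvexOn ℝ Set.univ Λ) :
    (⨅ w ∈ S, ⨆ τ : EuclideanSpace ℝ (Fin n), (((inner ℝ τ w : ℝ) - Λ τ : ℝ) : EReal))
      = ⨆ τ : EuclideanSpace ℝ (Fin n), ⨅ w ∈ S, (((inner ℝ τ w : ℝ) - Λ τ : ℝ) : EReal) :=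
  iInf_iSup_inner_sub_eq_iSup_iInf hScomp hSconv hΛconv

/-- Sion-type minimax interchange for the convex conjugate: for `S` nonempty
compact convex and `Λ` convex continuous,
`inf_{w ∈ S} sup_τ (⟨τ,w⟩ − Λ τ) = sup_τ inf_{w ∈ S} (⟨τ,w⟩ − Λ τ)` in `EReal`. -/
theorem stmt4 {n : ℕ} (S : Set (EuclideanSpace ℝ (Fin n)))
    (hS : S.Nonempty) (hScomp : IsCompact S) (hSconv : Convex ℝ S)
    (Λ : EuclideanSpace ℝ (Fin n) → ℝ)
    (hΛconv : ConvexOn ℝ Set.univ Λ) (hΛcont : Continuous Λ) :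
    (⨅ w ∈ S, ⨆ τ : EuclideanSpace ℝ (Fin n), (((inner ℝ τ w : ℝ) - Λ τ : ℝ) : EReal))
      = ⨆ τ : EuclideanSpace ℝ (Fin n), ⨅ w ∈ S, (((inner ℝ τ w : ℝ) - Λ τ : ℝ) : EReal) :=
  stmt4_general S hScomp hSconv Λ hΛconv
end

section
/- Let Λ : ℝ → ℝ be twice differentiable with Λ'(0) = 1 and |Λ''(s)| ≤ K for all s ∈ ℝ (so that |Λ'(s) − 1| ≤ K|s| and Λ' is K-Lipschitz). Let n ≥ 1, let a₁,...,aₙ and b₁,...,bₙ be vectors in ℝᵏ and v ∈ ℝᵏ, and suppose (1/n) Σᵢ bᵢ Λ'(⟨v, bᵢ⟩) = 0. Then ‖(1/n) Σᵢ aᵢ Λ'(⟨v, aᵢ⟩)‖ ≤ K‖v‖ · (1/n) Σᵢ ‖aᵢ‖ ‖aᵢ − bᵢ‖ + (1/n) Σᵢ ‖aᵢ − bᵢ‖ + K‖v‖ · (1/n) Σᵢ ‖bᵢ‖ ‖aᵢ − bᵢ‖. -/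
open Real

theorem abs_sub_le_of_abs_deriv_le {f : ℝ → ℝ} {K : ℝ} (hf : Differentiable ℝ f)
    (hK : ∀ s, |deriv f s| ≤ K) (x y : ℝ) : |f x - f y| ≤ K * |x - y| := by
  simpa only [Real.norm_eq_abs] using
    convex_univ.norm_image_sub_le_of_norm_deriv_le (fun z _ => hf z) (fun z _ => hK z)
      (Set.mem_univ y) (Set.mem_univ x)

section LipschitzWeight

variable {g : ℝ → ℝ} {K : ℝ}

theorem nonneg_of_abs_sub_le_mul (hg : ∀ x y, |g x - g y| ≤ K * |x - y|) : 0 ≤ K := by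
  simpa using (abs_nonneg _).trans (hg 1 0)

theorem abs_le_one_add_of_abs_sub_le_mul (hg0 : g 0 = 1)
    (hg : ∀ x y, |g x - g y| ≤ K * |x - y|) (t : ℝ) : |g t| ≤ 1 + K * |t| := by
  have h := hg t 0
  rw [hg0, sub_zero] at h
  linarith [abs_sub_abs_le_abs_sub (g t) 1, abs_one (α := ℝ)]

variable {E : Type*} [NormedAddCommGroup E] [InnerProductSpace ℝ E]

theorem norm_smul_inner_sub_smul_inner_le (hg0 : g 0 = 1)
    (hg : ∀ x y, |g x - g y| ≤ K * |x - y|) (v a b : E) :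
    ‖g (inner ℝ v a) • a - g (inner ℝ v b) • b‖
      ≤ K * ‖v‖ * (‖a‖ * ‖a - b‖) + ‖a - b‖ + K * ‖v‖ * (‖b‖ * ‖a - b‖) := by
  have hK := nonneg_of_abs_sub_le_mul hg
  have hga : |g (inner ℝ v a)| ≤ 1 + K * (‖v‖ * ‖a‖) :=
    (abs_le_one_add_of_abs_sub_le_mul hg0 hg _).trans <| by
      gcongr; exact abs_real_inner_le_norm v a
  have hgab : |g (inner ℝ v a) - g (inner ℝ v b)| ≤ K * (‖v‖ * ‖a - b‖) :=
    (hg _ _).trans <| by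
      rw [← inner_sub_right]; gcongr; exact abs_real_inner_le_norm v (a - b)
  calc ‖g (inner ℝ v a) • a - g (inner ℝ v b) • b‖
      = ‖g (inner ℝ v a) • (a - b) + (g (inner ℝ v a) - g (inner ℝ v b)) • b‖ := by
        congr 1; module
    _ ≤ |g (inner ℝ v a)| * ‖a - b‖ + |g (inner ℝ v a) - g (inner ℝ v b)| * ‖b‖ := by
        simpa only [norm_smul, Real.norm_eq_abs] using
          norm_add_le (g (inner ℝ v a) • (a - b)) ((g (inner ℝ v a) - g (inner ℝ v b)) • b)
    _ ≤ (1 + K * (‖v‖ * ‖a‖)) * ‖a - b‖ + K * (‖v‖ * ‖a - b‖) * ‖b‖ := by gcongr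
    _ = K * ‖v‖ * (‖a‖ * ‖a - b‖) + ‖a - b‖ + K * ‖v‖ * (‖b‖ * ‖a - b‖) := by ring

end LipschitzWeight

theorem stmt13_general {n k : ℕ} (Λ : ℝ → ℝ) (K : ℝ)
    (hd2 : ∀ s, DifferentiableAt ℝ (deriv Λ) s)
    (h1 : deriv Λ 0 = 1)
    (hK : ∀ s, |deriv (deriv Λ) s| ≤ K)
    (a b : Fin n → EuclideanSpace ℝ (Fin k)) (v : EuclideanSpace ℝ (Fin k))
    (hfoc : (1 / n : ℝ) • ∑ i, deriv Λ (inner ℝ v (b i) : ℝ) • b i = 0) :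
    ‖(1 / n : ℝ) • ∑ i, deriv Λ (inner ℝ v (a i) : ℝ) • a i‖
      ≤ K * ‖v‖ * ((1 / n : ℝ) * ∑ i, ‖a i‖ * ‖a i - b i‖)
        + (1 / n : ℝ) * ∑ i, ‖a i - b i‖
        + K * ‖v‖ * ((1 / n : ℝ) * ∑ i, ‖b i‖ * ‖a i - b i‖) := by
  have hterm i := norm_smul_inner_sub_smul_inner_le h1 (abs_sub_le_of_abs_deriv_le hd2 hK) v
    (a i) (b i)
  have hdiff : (1 / n : ℝ) • ∑ i, deriv Λ (inner ℝ v (a i)) • a i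
      = (1 / n : ℝ) • ∑ i, (deriv Λ (inner ℝ v (a i)) • a i - deriv Λ (inner ℝ v (b i)) • b i) := by
    rw [Finset.sum_sub_distrib, smul_sub, hfoc, sub_zero]
  calc ‖(1 / n : ℝ) • ∑ i, deriv Λ (inner ℝ v (a i)) • a i‖
      = (1 / n : ℝ)
          * ‖∑ i, (deriv Λ (inner ℝ v (a i)) • a i - deriv Λ (inner ℝ v (b i)) • b i)‖ := by
        rw [hdiff, norm_smul, Real.norm_of_nonneg (by positivity)]
    _ ≤ (1 / n : ℝ) * ∑ i, (K * ‖v‖ * (‖a i‖ * ‖a i - b i‖) + ‖a i - b i‖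
          + K * ‖v‖ * (‖b i‖ * ‖a i - b i‖)) := by
        gcongr
        exact (norm_sum_le _ _).trans (Finset.sum_le_sum fun i _ => hterm i)
    _ = _ := by
        rw [Finset.sum_add_distrib, Finset.sum_add_distrib, ← Finset.mul_sum, ← Finset.mul_sum]
        ring

/-- Key estimate in the proof of the robustness theorem: if
`(1/n)∑ᵢ bᵢ Λ'(⟨v,bᵢ⟩) = 0`, then `‖(1/n)∑ᵢ aᵢ Λ'(⟨v,aᵢ⟩)‖` is bounded by
`K‖v‖·(1/n)∑‖aᵢ‖‖aᵢ−bᵢ‖ + (1/n)∑‖aᵢ−bᵢ‖ + K‖v‖·(1/n)∑‖bᵢ‖‖aᵢ−bᵢ‖`. -/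
theorem stmt13 {n k : ℕ} (hn : 1 ≤ n) (Λ : ℝ → ℝ) (K : ℝ)
    (hd1 : ∀ s, DifferentiableAt ℝ Λ s)
    (hd2 : ∀ s, DifferentiableAt ℝ (deriv Λ) s)
    (h1 : deriv Λ 0 = 1)
    (hK : ∀ s, |deriv (deriv Λ) s| ≤ K)
    (a b : Fin n → EuclideanSpace ℝ (Fin k)) (v : EuclideanSpace ℝ (Fin k))
    (hfoc : (1 / n : ℝ) • ∑ i, deriv Λ (inner ℝ v (b i) : ℝ) • b i = 0) :
    ‖(1 / n : ℝ) • ∑ i, deriv Λ (inner ℝ v (a i) : ℝ) • a i‖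
      ≤ K * ‖v‖ * ((1 / n : ℝ) * ∑ i, ‖a i‖ * ‖a i - b i‖)
        + (1 / n : ℝ) * ∑ i, ‖a i - b i‖
        + K * ‖v‖ * ((1 / n : ℝ) * ∑ i, ‖b i‖ * ‖a i - b i‖) :=
  stmt13_general Λ K hd2 h1 hK a b v hfoc
end
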